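/- For a probability vector generated by temperature-scaled softmax, the entropy H(T) = −Σ_i p_i(T) log p_i(T) is a continuous and nondecreasing function of the temperature T > 0; hence for any target entropy level c with H(1) < c < log n there exists T_scale > 1 such that H(T_scale) = c (assuming not all logits are equal). -/

import Mathlib

open Real Finset Set

/-! Passing to the inverse temperature `β = 1 / T`, the softmax entropy is
`G β = log Z β - β Z'(β) / Z β` for the partition function `Z β = ∑ᵢ exp (β mᵢ)`, and
`G' β = -β Var_β(m) ≤ 0` for `β ≥ 0`, the variance being nonnegative by Cauchy–Schwarz.
Since `G 0 = log n`, the intermediate value theorem on `[0, 1]` produces `β ∈ (0, 1)` with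
`G β = c`, i.e. `T = 1 / β > 1`. -/

variable {ι : Type*} [Fintype ι] (m : ι → ℝ)

noncomputable def expMoment (k : ℕ) (β : ℝ) : ℝ := ∑ i, m i ^ k * exp (β * m i)

noncomputable def gibbsEntropy (β : ℝ) : ℝ :=
  log (expMoment m 0 β) - β * expMoment m 1 β / expMoment m 0 β

lemma expMoment_zero_pos [Nonempty ι] (β : ℝ) : 0 < expMoment m 0 β :=
  sum_pos (fun i _ => by simp [exp_pos]) univ_nonempty

lemma hasDerivAt_expMoment (k : ℕ) (β : ℝ) :
    HasDerivAt (expMoment m k) (expMoment m (k + 1) β) β :=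
  HasDerivAt.fun_sum fun i _ =>
    ((hasDerivAt_mul_const (m i)).exp.const_mul (m i ^ k)).congr_deriv (by ring)

lemma expMoment_one_sq_le (β : ℝ) :
    expMoment m 1 β ^ 2 ≤ expMoment m 2 β * expMoment m 0 β :=
  sum_sq_le_sum_mul_sum_of_sq_le_mul _ (fun i _ => by positivity) (fun i _ => by positivity)
    fun i _ => le_of_eq (by ring)

lemma hasDerivAt_gibbsEntropy [Nonempty ι] (β : ℝ) :
    HasDerivAt (gibbsEntropy m)
      (-(β * (expMoment m 2 β * expMoment m 0 β - expMoment m 1 β ^ 2) / expMoment m 0 β ^ 2))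
      β := by
  have hZ := (expMoment_zero_pos m β).ne'
  have hlog := (hasDerivAt_expMoment m 0 β).log hZ
  have hmean := ((hasDerivAt_id' β).fun_mul (hasDerivAt_expMoment m 1 β)).fun_div
    (hasDerivAt_expMoment m 0 β) hZ
  exact (hlog.sub hmean).congr_deriv (by field_simp; ring)

lemma continuous_gibbsEntropy [Nonempty ι] : Continuous (gibbsEntropy m) :=
  continuous_iff_continuousAt.2 fun β => (hasDerivAt_gibbsEntropy m β).continuousAt

lemma antitoneOn_gibbsEntropy [Nonempty ι] : AntitoneOn (gibbsEntropy m) (Ici 0) := by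
  refine antitoneOn_of_hasDerivWithinAt_nonpos (convex_Ici 0)
    (continuous_gibbsEntropy m).continuousOn
    (fun β _ => (hasDerivAt_gibbsEntropy m β).hasDerivWithinAt) fun β hβ => ?_
  rw [interior_Ici] at hβ
  have hvar := sub_nonneg.2 (expMoment_one_sq_le m β)
  have := div_nonneg (mul_nonneg (le_of_lt hβ) hvar) (sq_nonneg (expMoment m 0 β))
  linarith

lemma gibbsEntropy_zero : gibbsEntropy m 0 = log (Fintype.card ι) := by
  simp [gibbsEntropy, expMoment]

lemma softmax_entropy_eq_gibbsEntropy [Nonempty ι] (T : ℝ) :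
    -(∑ i, (exp (m i / T) / ∑ j, exp (m j / T)) * log (exp (m i / T) / ∑ j, exp (m j / T)))
      = gibbsEntropy m T⁻¹ := by
  have hZ := expMoment_zero_pos m T⁻¹
  simp only [gibbsEntropy, expMoment, pow_zero, pow_one, one_mul] at hZ ⊢
  have hdiv : ∀ i, m i / T = T⁻¹ * m i := fun i => div_eq_inv_mul _ _
  simp only [hdiv]
  have hlog : ∀ i, log (exp (T⁻¹ * m i) / ∑ j, exp (T⁻¹ * m j))
      = T⁻¹ * m i - log (∑ j, exp (T⁻¹ * m j)) := fun i => by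
    rw [log_div (exp_ne_zero _) hZ.ne', log_exp]
  simp only [hlog, div_mul_eq_mul_div, ← sum_div, mul_sub, sum_sub_distrib, ← sum_mul]
  field_simp
  rw [← sum_div]
  ring

theorem softmax_entropy_continuous_monotone_and_attains_general
    (n : ℕ) (hn : 2 ≤ n) (m : Fin n → ℝ) :
    let H : ℝ → ℝ := fun T =>
      -(∑ i, (Real.exp (m i / T) / ∑ j, Real.exp (m j / T)) *
          Real.log (Real.exp (m i / T) / ∑ j, Real.exp (m j / T)))
    ContinuousOn H (Set.Ioi 0) ∧
    MonotoneOn H (Set.Ioi 0) ∧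
    ∀ c : ℝ, H 1 < c → c < Real.log n →
      ∃ T_scale : ℝ, 1 < T_scale ∧ H T_scale = c := by
  have : Nonempty (Fin n) := ⟨⟨0, by omega⟩⟩
  simp only [softmax_entropy_eq_gibbsEntropy, inv_one]
  have hG := continuous_gibbsEntropy m
  refine ⟨hG.comp_continuousOn (continuousOn_inv₀.mono fun T hT => ne_of_gt hT), ?_, ?_⟩
  · intro a (ha : 0 < a) b (hb : 0 < b) hab
    exact antitoneOn_gibbsEntropy m (inv_pos.2 hb).le (inv_pos.2 ha).le (inv_anti₀ ha hab)
  · intro c hc1 hcn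
    rw [← Fintype.card_fin n, ← gibbsEntropy_zero] at hcn
    obtain ⟨β, hβ, rfl⟩ := intermediate_value_Ioo' zero_le_one hG.continuousOn ⟨hc1, hcn⟩
    exact ⟨β⁻¹, one_lt_inv₀ hβ.1 |>.2 hβ.2, by rw [inv_inv]⟩

/-- For the temperature-scaled softmax distribution with logits not all equal,
the entropy H(T) = −∑ᵢ pᵢ(T) log pᵢ(T) is continuous and nondecreasing in
T > 0, and for any target entropy c with H(1) < c < log n there exists
T_scale > 1 with H(T_scale) = c. -/
theorem softmax_entropy_continuous_monotone_and_attains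
    (n : ℕ) (hn : 2 ≤ n) (m : Fin n → ℝ)
    (hne : ¬ ∀ i j : Fin n, m i = m j) :
    let H : ℝ → ℝ := fun T =>
      -(∑ i, (Real.exp (m i / T) / ∑ j, Real.exp (m j / T)) *
          Real.log (Real.exp (m i / T) / ∑ j, Real.exp (m j / T)))
    ContinuousOn H (Set.Ioi 0) ∧
    MonotoneOn H (Set.Ioi 0) ∧
    ∀ c : ℝ, H 1 < c → c < Real.log n →
      ∃ T_scale : ℝ, 1 < T_scale ∧ H T_scale = c :=
  softmax_entropy_continuous_monotone_and_attains_general n hn m
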